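/- arXiv:2109.10313 — 3 statements merged into one kernel-verified Lean document; each statement's English description precedes it below -/
import Mathlib

section
/- Let p be a real number with 0 < p < 1 and p ≠ 1/2, set q = 1 - p, and let x, k be integers with 0 < x < k. Let X₁, X₂, … be i.i.d. random variables on a probability space with P(Xₙ = 1) = p and P(Xₙ = -1) = q, and let Sₙ be the simple random walk defined by S₀ = x and Sₙ = Sₙ₋₁ + Xₙ. Then the probability that the walk (Sₙ) reaches 0 strictly before reaching k equals (1 - (p/q)^(k-x)) / (1 - (p/q)^k). -/
/-!
A finite `±1` path started at `y` is a ruin path if it ends at `0` and visits neither `0` nor `k`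
before. Almost surely the ruin event is the disjoint union of the cylinders
`{X₁, …, X_|l| follow l}` over ruin paths `l`, so by independence its probability is
`h y = ∑ₗ p^#wins q^#losses`. Splitting off the first step gives `h y = q h (y - 1) + p h (y + 1)`
for `y ≠ 0, k`, with `h 0 = 1` and `h k = 0`. The increments of a solution of this recurrence on `[0, k]` form a geometric progression
of ratio `q / p`, so the boundary values determine it, and `(1 - (p/q)^(k-y)) / (1 - (p/q)^k)` is
a solution.
-/

open MeasureTheory ProbabilityTheory ENNReal Finset

namespace GamblersRuin

section BoundaryValueProblem

variable {p q : ℝ}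

theorem eq_zero_of_harmonic (hp : 0 < p) (hq : 0 ≤ q) (hpq : p + q = 1) {k : ℕ} {w : ℕ → ℝ}
    (h0 : w 0 = 0) (hk : w k = 0)
    (hw : ∀ n, n + 1 < k → w (n + 1) = q * w n + p * w (n + 2)) :
    ∀ n ≤ k, w n = 0 := by
  have hincr : ∀ n < k, w (n + 1) - w n = (q / p) ^ n * w 1 := by
    intro n hn
    induction n with
    | zero => simp [h0]
    | succ n ih =>
      rw [pow_succ, mul_comm _ (q / p), mul_assoc, ← ih (by omega)]
      field_simp
      linear_combination -hw n hn - w (n + 1) * hpq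
  have hsum : ∀ n ≤ k, w n = (∑ j ∈ range n, (q / p) ^ j) * w 1 := by
    intro n hn
    rw [sum_mul, ← sub_zero (w n), ← h0, ← sum_range_sub]
    exact sum_congr rfl fun j hj => hincr j (by simp at hj; omega)
  intro n hn
  rcases Nat.eq_zero_or_pos k with rfl | hkpos
  · rw [Nat.le_zero.1 hn, h0]
  have hw1 : w 1 = 0 := by
    have hsum_k := hsum k le_rfl
    rw [hk] at hsum_k
    exact (mul_eq_zero.1 hsum_k.symm).resolve_left
      (geom_sum_pos (div_nonneg hq hp.le) hkpos.ne').ne'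
  rw [hsum n hn, hw1, mul_zero]

theorem eq_of_harmonic (hp : 0 < p) (hq : 0 ≤ q) (hpq : p + q = 1) {k : ℤ} {u v : ℤ → ℝ}
    (hu : ∀ y, 0 < y → y < k → u y = q * u (y - 1) + p * u (y + 1))
    (hv : ∀ y, 0 < y → y < k → v y = q * v (y - 1) + p * v (y + 1))
    (h0 : u 0 = v 0) (hk : u k = v k) :
    ∀ y, 0 ≤ y → y ≤ k → u y = v y := by
  intro y hy0 hyk
  lift k to ℕ using by omega
  lift y to ℕ using hy0
  refine sub_eq_zero.1 (eq_zero_of_harmonic hp hq hpq (w := fun n : ℕ => u n - v n)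
    (sub_eq_zero.2 h0) (sub_eq_zero.2 hk) (fun n hn => ?_) y (by exact_mod_cast hyk))
  have hn' : ((n + 1 : ℕ) : ℤ) < k := by exact_mod_cast hn
  have hu' := hu (n + 1 : ℕ) (by positivity) hn'
  have hv' := hv (n + 1 : ℕ) (by positivity) hn'
  push_cast at hu' hv' ⊢
  rw [add_sub_cancel_right, add_assoc, one_add_one_eq_two] at hu' hv'
  linear_combination hu' - hv'

theorem zpow_div_eq_add (hp : p ≠ 0) (hq : q ≠ 0) (hpq : p + q = 1) (m : ℤ) :
    (p / q) ^ m = q * (p / q) ^ (m + 1) + p * (p / q) ^ (m - 1) := by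
  have hr : p / q ≠ 0 := div_ne_zero hp hq
  rw [zpow_add_one₀ hr, zpow_sub_one₀ hr]
  field_simp
  exact hpq.symm

noncomputable def ruinFormula (p q : ℝ) (k y : ℤ) : ℝ := (1 - (p / q) ^ (k - y)) / (1 - (p / q) ^ k)

theorem ruinFormula_eq_add (hp : p ≠ 0) (hq : q ≠ 0) (hpq : p + q = 1) (k y : ℤ) :
    ruinFormula p q k y = q * ruinFormula p q k (y - 1) + p * ruinFormula p q k (y + 1) := by
  have key := zpow_div_eq_add hp hq hpq (k - y)
  simp only [ruinFormula]
  rw [show k - (y - 1) = k - y + 1 by ring, show k - (y + 1) = k - y - 1 by ring]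
  set r := p / q
  simp only [div_eq_mul_inv]
  linear_combination -(1 - r ^ k)⁻¹ * (hpq + key)

theorem ruinFormula_zero (hr : 0 ≤ p / q) (hr1 : p / q ≠ 1) {k : ℤ} (hk : k ≠ 0) :
    ruinFormula p q k 0 = 1 := by
  rw [ruinFormula, sub_zero, div_self]
  rwa [sub_ne_zero, ne_comm, Ne, zpow_eq_one_iff_right₀ hr hr1]

theorem ruinFormula_self (k : ℤ) : ruinFormula p q k k = 0 := by
  simp [ruinFormula]

end BoundaryValueProblem

section Paths

def step (b : Bool) : ℤ := if b then 1 else -1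

theorem step_injective : Function.Injective step := by
  decide

def pathPos (y : ℤ) (l : List Bool) (m : ℕ) : ℤ := y + ∑ i ∈ range m, step (l.getD i false)

@[simp] theorem pathPos_zero (y : ℤ) (l : List Bool) : pathPos y l 0 = y := by
  simp [pathPos]

theorem pathPos_succ (y : ℤ) (l : List Bool) (m : ℕ) :
    pathPos y l (m + 1) = pathPos y l m + step (l.getD m false) := by
  rw [pathPos, pathPos, sum_range_succ, add_assoc]

theorem pathPos_cons_succ (y : ℤ) (b : Bool) (l : List Bool) (m : ℕ) :
    pathPos y (b :: l) (m + 1) = pathPos (y + step b) l m := by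
  simp only [pathPos, sum_range_succ', List.getD_cons_succ, List.getD_cons_zero]
  ring

def IsFirstRuin (k : ℤ) (s : ℕ → ℤ) (n : ℕ) : Prop :=
  s n = 0 ∧ ∀ m < n, s m ≠ 0 ∧ s m ≠ k

theorem isFirstRuin_zero {k : ℤ} {s : ℕ → ℤ} : IsFirstRuin k s 0 ↔ s 0 = 0 := by
  simp [IsFirstRuin]

theorem isFirstRuin_succ {k : ℤ} {s : ℕ → ℤ} {n : ℕ} :
    IsFirstRuin k s (n + 1) ↔ s 0 ≠ 0 ∧ s 0 ≠ k ∧ IsFirstRuin k (fun m => s (m + 1)) n := by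
  simp only [IsFirstRuin, Nat.forall_lt_succ_left]
  tauto

theorem IsFirstRuin.congr {k : ℤ} {s t : ℕ → ℤ} {n : ℕ} (h : IsFirstRuin k s n)
    (hst : ∀ m ≤ n, s m = t m) : IsFirstRuin k t n :=
  ⟨hst n le_rfl ▸ h.1, fun m hm => hst m hm.le ▸ h.2 m hm⟩

theorem IsFirstRuin.unique {k : ℤ} {s : ℕ → ℤ} {n n' : ℕ} (h : IsFirstRuin k s n)
    (h' : IsFirstRuin k s n') : n = n' := by
  by_contra hne
  rcases Nat.lt_or_gt_of_ne hne with hlt | hlt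
  · exact (h'.2 n hlt).1 h.1
  · exact (h.2 n' hlt).1 h'.1

theorem exists_isFirstRuin_iff {k : ℤ} (hk : k ≠ 0) {s : ℕ → ℤ} :
    (∃ n, IsFirstRuin k s n) ↔ ∃ n, s n = 0 ∧ ∀ m ≤ n, s m ≠ k := by
  constructor
  · rintro ⟨n, hn, hbefore⟩
    refine ⟨n, hn, fun m hm => ?_⟩
    rcases hm.lt_or_eq with hlt | rfl
    · exact (hbefore m hlt).2
    · rw [hn]; exact hk.symm
  · rintro ⟨n, hn, hnk⟩
    have hex : ∃ n, s n = 0 := ⟨n, hn⟩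
    refine ⟨Nat.find hex, Nat.find_spec hex, fun m hm => ⟨Nat.find_min hex hm, hnk m ?_⟩⟩
    exact hm.le.trans (Nat.find_min' hex hn)

def ruinPaths (k y : ℤ) : Set (List Bool) := {l | IsFirstRuin k (pathPos y l) l.length}

theorem nil_mem_ruinPaths {k y : ℤ} : [] ∈ ruinPaths k y ↔ y = 0 := by
  simp [ruinPaths, isFirstRuin_zero]

theorem cons_mem_ruinPaths {k y : ℤ} {b : Bool} {l : List Bool} :
    b :: l ∈ ruinPaths k y ↔ y ≠ 0 ∧ y ≠ k ∧ l ∈ ruinPaths k (y + step b) := by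
  simp only [ruinPaths, Set.mem_ofPred_eq, List.length_cons, isFirstRuin_succ, pathPos_zero,
    pathPos_cons_succ]

noncomputable def stepWeight (p q : ℝ) (b : Bool) : ℝ≥0∞ :=
  if b then ENNReal.ofReal p else ENNReal.ofReal q

noncomputable def pathWeight (p q : ℝ) (l : List Bool) : ℝ≥0∞ :=
  ∏ i ∈ range l.length, stepWeight p q (l.getD i false)

theorem pathWeight_cons (p q : ℝ) (b : Bool) (l : List Bool) :
    pathWeight p q (b :: l) = stepWeight p q b * pathWeight p q l := by
  simp only [pathWeight, List.length_cons, prod_range_succ', List.getD_cons_succ,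
    List.getD_cons_zero, mul_comm]

noncomputable def ruinWeight (p q : ℝ) (k y : ℤ) : ℝ≥0∞ :=
  ∑' l : List Bool, (ruinPaths k y).indicator (pathWeight p q) l

theorem ruinWeight_zero (p q : ℝ) (k : ℤ) : ruinWeight p q k 0 = 1 := by
  rw [ruinWeight, tsum_eq_single []]
  · simp [nil_mem_ruinPaths, pathWeight]
  · rintro (_ | ⟨b, l⟩) hl
    · exact absurd rfl hl
    · simp [cons_mem_ruinPaths]

theorem ruinWeight_self (p q : ℝ) {k : ℤ} (hk : k ≠ 0) : ruinWeight p q k k = 0 := by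
  refine ENNReal.tsum_eq_zero.2 fun l => Set.indicator_of_notMem ?_ _
  rcases l with _ | ⟨b, l⟩
  · simpa [nil_mem_ruinPaths] using hk
  · simp [cons_mem_ruinPaths]

theorem ruinWeight_eq_add (p q : ℝ) {k y : ℤ} (hy0 : y ≠ 0) (hyk : y ≠ k) :
    ruinWeight p q k y =
      ENNReal.ofReal q * ruinWeight p q k (y - 1) +
        ENNReal.ofReal p * ruinWeight p q k (y + 1) := by
  have hcons : Function.Injective fun bl : Bool × List Bool => bl.1 :: bl.2 :=
    fun _ _ h => Prod.ext (List.cons.inj h).1 (List.cons.inj h).2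
  have hsupp : Function.support (fun l => (ruinPaths k y).indicator (pathWeight p q) l) ⊆
      Set.range fun bl : Bool × List Bool => bl.1 :: bl.2 := by
    rintro (_ | ⟨b, l⟩) hl
    · exact absurd (Set.indicator_of_notMem (by simpa [nil_mem_ruinPaths] using hy0) _) hl
    · exact ⟨(b, l), rfl⟩
  have hfirst : ∀ b l, (ruinPaths k y).indicator (pathWeight p q) (b :: l) =
      stepWeight p q b * (ruinPaths k (y + step b)).indicator (pathWeight p q) l := by
    intro b l
    by_cases hl : l ∈ ruinPaths k (y + step b)
    · rw [Set.indicator_of_mem (cons_mem_ruinPaths.2 ⟨hy0, hyk, hl⟩), Set.indicator_of_mem hl,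
        pathWeight_cons]
    · rw [Set.indicator_of_notMem (fun h => hl (cons_mem_ruinPaths.1 h).2.2),
        Set.indicator_of_notMem hl, mul_zero]
  rw [ruinWeight, ← hcons.tsum_eq hsupp, ENNReal.tsum_prod', tsum_bool]
  simp only [hfirst, ENNReal.tsum_mul_left]
  -- `y + step false` unfolds to `y - 1`
  rfl

theorem toReal_ruinWeight_eq_add {p q : ℝ} (hp : 0 ≤ p) (hq : 0 ≤ q) {k y : ℤ}
    (hfin₁ : ruinWeight p q k (y - 1) ≠ ∞) (hfin₂ : ruinWeight p q k (y + 1) ≠ ∞)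
    (hy0 : y ≠ 0) (hyk : y ≠ k) :
    (ruinWeight p q k y).toReal =
      q * (ruinWeight p q k (y - 1)).toReal + p * (ruinWeight p q k (y + 1)).toReal := by
  rw [ruinWeight_eq_add p q hy0 hyk, ENNReal.toReal_add (mul_ne_top ofReal_ne_top hfin₁)
    (mul_ne_top ofReal_ne_top hfin₂), toReal_mul, toReal_mul, toReal_ofReal hq, toReal_ofReal hp]

end Paths

section Walk

variable {Ω : Type*} {X : ℕ → Ω → ℤ}

def cylinder (X : ℕ → Ω → ℤ) (l : List Bool) : Set Ω :=
  {ω | ∀ i < l.length, X (i + 1) ω = step (l.getD i false)}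

theorem cylinder_eq_biInter (X : ℕ → Ω → ℤ) (l : List Bool) :
    cylinder X l = ⋂ i ∈ range l.length, X (i + 1) ⁻¹' {step (l.getD i false)} := by
  ext ω
  simp [cylinder]

theorem mem_cylinder_ofFn {ω : Ω} (hω : ∀ n, X n ω = 1 ∨ X n ω = -1) (n : ℕ) :
    ω ∈ cylinder X (List.ofFn fun i : Fin n => decide (X (i + 1) ω = 1)) := by
  intro i hi
  rw [List.getD_eq_getElem _ _ hi, List.getElem_ofFn]
  rcases hω (i + 1) with h | h <;> simp [h, step]

theorem eq_of_mem_cylinder {ω : Ω} {l l' : List Bool} (h : ω ∈ cylinder X l)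
    (h' : ω ∈ cylinder X l') (hlen : l.length = l'.length) : l = l' := by
  refine List.ext_getElem hlen fun i hi hi' => ?_
  have := (h i hi).symm.trans (h' i hi')
  rwa [List.getD_eq_getElem _ _ hi, List.getD_eq_getElem _ _ hi', step_injective.eq_iff] at this

theorem walk_eq_pathPos_of_mem_cylinder {S : ℕ → Ω → ℤ} {x : ℤ} (hS0 : ∀ ω, S 0 ω = x)
    (hSrec : ∀ n ω, S (n + 1) ω = S n ω + X (n + 1) ω) {ω : Ω} {l : List Bool}
    (h : ω ∈ cylinder X l) : ∀ m ≤ l.length, S m ω = pathPos x l m := by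
  intro m hm
  induction m with
  | zero => simp [hS0]
  | succ m ih => rw [hSrec, ih (by omega), h m hm, pathPos_succ]

theorem isFirstRuin_walk_iff {S : ℕ → Ω → ℤ} {k x : ℤ} (hS0 : ∀ ω, S 0 ω = x)
    (hSrec : ∀ n ω, S (n + 1) ω = S n ω + X (n + 1) ω) {ω : Ω} {l : List Bool}
    (h : ω ∈ cylinder X l) : IsFirstRuin k (S · ω) l.length ↔ l ∈ ruinPaths k x :=
  have hwalk := walk_eq_pathPos_of_mem_cylinder hS0 hSrec h
  ⟨fun hr => hr.congr hwalk, fun hr => hr.congr fun m hm => (hwalk m hm).symm⟩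

variable [MeasurableSpace Ω] {P : Measure Ω} {p q : ℝ}

theorem measurableSet_cylinder (hX : ∀ n, Measurable (X n)) (l : List Bool) :
    MeasurableSet (cylinder X l) := by
  rw [cylinder_eq_biInter]
  exact .biInter (range l.length).countable_toSet fun i _ => hX (i + 1) (measurableSet_singleton _)

theorem measure_cylinder (hindep : iIndepFun X P)
    (hXup : ∀ n, P {ω | X n ω = 1} = ENNReal.ofReal p)
    (hXdown : ∀ n, P {ω | X n ω = -1} = ENNReal.ofReal q) (l : List Bool) :
    P (cylinder X l) = pathWeight p q l := by
  rw [cylinder_eq_biInter, (hindep.precomp (add_left_injective 1)).measure_inter_preimage_eq_mul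
    _ fun _ _ => measurableSet_singleton _]
  refine prod_congr rfl fun i _ => ?_
  cases l.getD i false
  · exact hXdown (i + 1)
  · exact hXup (i + 1)

theorem ae_eq_one_or_eq_neg_one [IsProbabilityMeasure P] (hp : 0 ≤ p) (hq : 0 ≤ q)
    (hpq : p + q = 1) (hX : ∀ n, Measurable (X n))
    (hXup : ∀ n, P {ω | X n ω = 1} = ENNReal.ofReal p)
    (hXdown : ∀ n, P {ω | X n ω = -1} = ENNReal.ofReal q) :
    ∀ᵐ ω ∂P, ∀ n, X n ω = 1 ∨ X n ω = -1 := by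
  refine ae_all_iff.2 fun n => ?_
  have hdisj : Disjoint {ω | X n ω = 1} {ω | X n ω = -1} :=
    Set.disjoint_left.2 fun ω h1 h2 => by simp_all
  have hmeas : MeasurableSet {ω | X n ω = 1 ∨ X n ω = -1} :=
    (hX n (measurableSet_singleton 1)).union (hX n (measurableSet_singleton (-1)))
  rw [ae_iff_measure_eq hmeas.nullMeasurableSet, Set.ofPred_or,
    measure_union hdisj (hX n (measurableSet_singleton _)), hXup, hXdown,
    ← ENNReal.ofReal_add hp hq, hpq, ENNReal.ofReal_one, measure_univ]

theorem measure_ruin_eq_ruinWeight [IsProbabilityMeasure P] (hp : 0 ≤ p) (hq : 0 ≤ q)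
    (hpq : p + q = 1) {k : ℤ} (hk : k ≠ 0) (hX : ∀ n, Measurable (X n)) (hindep : iIndepFun X P)
    (hXup : ∀ n, P {ω | X n ω = 1} = ENNReal.ofReal p)
    (hXdown : ∀ n, P {ω | X n ω = -1} = ENNReal.ofReal q) {S : ℕ → Ω → ℤ} {x : ℤ}
    (hS0 : ∀ ω, S 0 ω = x) (hSrec : ∀ n ω, S (n + 1) ω = S n ω + X (n + 1) ω) :
    P {ω | ∃ n, S n ω = 0 ∧ ∀ m ≤ n, S m ω ≠ k} = ruinWeight p q k x := by
  -- a path is read off `ω` only where every step is `±1`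
  have hcover : ∀ᵐ ω ∂P, ω ∈ {ω | ∃ n, S n ω = 0 ∧ ∀ m ≤ n, S m ω ≠ k} ↔
      ω ∈ ⋃ l : ruinPaths k x, cylinder X l := by
    filter_upwards [ae_eq_one_or_eq_neg_one hp hq hpq hX hXup hXdown] with ω hω
    simp only [← exists_isFirstRuin_iff hk, Set.mem_iUnion]
    constructor
    · rintro ⟨n, hn⟩
      have hcyl := mem_cylinder_ofFn hω n
      exact ⟨⟨_, (isFirstRuin_walk_iff hS0 hSrec hcyl).1 (by rwa [List.length_ofFn])⟩, hcyl⟩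
    · rintro ⟨⟨l, hl⟩, hcyl⟩
      exact ⟨l.length, (isFirstRuin_walk_iff hS0 hSrec hcyl).2 hl⟩
  have hdisj : Pairwise (Function.onFun Disjoint fun l : ruinPaths k x => cylinder X l) := by
    refine fun l l' hne => Set.disjoint_left.2 fun ω h h' => hne (Subtype.ext ?_)
    exact eq_of_mem_cylinder h h' <|
      ((isFirstRuin_walk_iff hS0 hSrec h).2 l.2).unique ((isFirstRuin_walk_iff hS0 hSrec h').2 l'.2)
  rw [measure_congr (Filter.eventuallyEq_set.2 hcover),
    measure_iUnion hdisj fun l => measurableSet_cylinder hX l, ruinWeight, ← _root_.tsum_subtype]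
  exact tsum_congr fun l => measure_cylinder hindep hXup hXdown l

theorem ruinWeight_le_one (P : Measure Ω) [IsProbabilityMeasure P] (hp : 0 ≤ p) (hq : 0 ≤ q)
    (hpq : p + q = 1) {k : ℤ} (hk : k ≠ 0) (hX : ∀ n, Measurable (X n)) (hindep : iIndepFun X P)
    (hXup : ∀ n, P {ω | X n ω = 1} = ENNReal.ofReal p)
    (hXdown : ∀ n, P {ω | X n ω = -1} = ENNReal.ofReal q) (y : ℤ) :
    ruinWeight p q k y ≤ 1 := by
  rw [← measure_ruin_eq_ruinWeight hp hq hpq hk hX hindep hXup hXdown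
    (S := fun n ω => y + ∑ i ∈ range n, X (i + 1) ω) (fun _ => by simp)
    (fun n ω => by simp [sum_range_succ, add_assoc])]
  exact prob_le_one

end Walk

end GamblersRuin

open GamblersRuin

theorem gamblers_ruin_probability_general
    {Ω : Type*} [m : MeasurableSpace Ω] (P : Measure Ω) [IsProbabilityMeasure P]
    (p q : ℝ) (hp0 : 0 < p) (hp1 : p < 1) (hp : p ≠ 1 / 2) (hq : q = 1 - p)
    (x k : ℤ) (hx : 0 < x) (hxk : x < k)
    (X : ℕ → Ω → ℤ) (hXmeas : ∀ n, Measurable (X n))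
    (hindep : iIndepFun X P)
    (hXup : ∀ n, P {ω | X n ω = 1} = ENNReal.ofReal p)
    (hXdown : ∀ n, P {ω | X n ω = -1} = ENNReal.ofReal q)
    (S : ℕ → Ω → ℤ) (hS0 : ∀ ω, S 0 ω = x)
    (hSrec : ∀ n ω, S (n + 1) ω = S n ω + X (n + 1) ω) :
    P {ω | ∃ n : ℕ, S n ω = 0 ∧ ∀ m ≤ n, S m ω ≠ k} =
      ENNReal.ofReal ((1 - (p / q) ^ (k - x)) / (1 - (p / q) ^ k)) := by
  have hq0 : 0 < q := by linarith
  have hpq : p + q = 1 := by linarith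
  have hk : k ≠ 0 := by omega
  have hr : p / q ≠ 1 := fun h => hp (by rw [div_eq_one_iff_eq hq0.ne'] at h; linarith)
  have hfin : ∀ y, ruinWeight p q k y ≠ ∞ := fun y => ne_top_of_le_ne_top one_ne_top
    (ruinWeight_le_one P hp0.le hq0.le hpq hk hXmeas hindep hXup hXdown y)
  rw [measure_ruin_eq_ruinWeight hp0.le hq0.le hpq hk hXmeas hindep hXup hXdown hS0 hSrec,
    ← ofReal_toReal (hfin x)]
  congr 1
  refine eq_of_harmonic hp0 hq0.le hpq (u := fun y => (ruinWeight p q k y).toReal)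
    (v := ruinFormula p q k)
    (fun y hy0 hyk => toReal_ruinWeight_eq_add hp0.le hq0.le (hfin _) (hfin _) hy0.ne' hyk.ne)
    (fun y _ _ => ruinFormula_eq_add hp0.ne' hq0.ne' hpq k y) ?_ ?_ x hx.le hxk.le
  · rw [ruinWeight_zero, ruinFormula_zero (by positivity) hr hk, toReal_one]
  · rw [ruinWeight_self p q hk, ruinFormula_self, toReal_zero]

/-- Formula (3.1.6), case `p ≠ 1/2`: for the simple random walk started at `x`
with i.i.d. `±1` steps of probabilities `p` and `q = 1 - p`, the probability of
reaching `0` strictly before reaching `k` is `(1 - (p/q)^(k-x)) / (1 - (p/q)^k)`. -/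
theorem gamblers_ruin_probability
    {Ω : Type*} [m : MeasurableSpace Ω] (P : Measure Ω) [IsProbabilityMeasure P]
    (p q : ℝ) (hp0 : 0 < p) (hp1 : p < 1) (hp : p ≠ 1 / 2) (hq : q = 1 - p)
    (x k : ℤ) (hx : 0 < x) (hxk : x < k)
    (X : ℕ → Ω → ℤ) (hXmeas : ∀ n, Measurable (X n))
    (hindep : iIndepFun X P)
    (hident : ∀ n, IdentDistrib (X n) (X 0) P P)
    (hXup : ∀ n, P {ω | X n ω = 1} = ENNReal.ofReal p)
    (hXdown : ∀ n, P {ω | X n ω = -1} = ENNReal.ofReal q)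
    (S : ℕ → Ω → ℤ) (hS0 : ∀ ω, S 0 ω = x)
    (hSrec : ∀ n ω, S (n + 1) ω = S n ω + X (n + 1) ω) :
    P {ω | ∃ n : ℕ, S n ω = 0 ∧ ∀ m ≤ n, S m ω ≠ k} =
      ENNReal.ofReal ((1 - (p / q) ^ (k - x)) / (1 - (p / q) ^ k)) :=
  gamblers_ruin_probability_general (m := m) P p q hp0 hp1 hp hq x k hx hxk X hXmeas hindep hXup
    hXdown S hS0 hSrec
end

section
/- Let p be a real number with 1/2 < p < 1, set q = 1 - p, and let x be a positive integer. Let X₁, X₂, … be i.i.d. random variables on a probability space with P(Xₙ = 1) = p and P(Xₙ = -1) = q, and let Sₙ be the simple random walk defined by S₀ = x and Sₙ = Sₙ₋₁ + Xₙ. Then the probability that there exists some n ≥ 0 with Sₙ = 0 equals (q/p)^x. -/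
/-!
With `r = q / p` one has `E[r ^ Xₙ] = p r + q r⁻¹ = 1`, so `r ^ Sₙ` is a martingale. Stopped at
the ruin time it stays in `(0, 1]`, because the walk cannot jump over `0`, and its expectation stays
`r ^ x`. By the strong law of large numbers `Sₙ → ∞` almost surely, so the stopped process tends to
the indicator of ruin, and dominated convergence gives `P(ruin) = r ^ x`.
-/

open MeasureTheory ProbabilityTheory Filter Topology Finset Function

lemma tendsto_zpow_atTop_nhds_zero_of_lt_one {r : ℝ} (h0 : 0 ≤ r) (h1 : r < 1) :
    Tendsto (fun z : ℤ => r ^ z) atTop (𝓝 0) := by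
  have htoNat : Tendsto Int.toNat atTop atTop :=
    tendsto_atTop_atTop.2 fun b => ⟨b, fun z hz => by omega⟩
  refine ((tendsto_pow_atTop_nhds_zero_of_lt_one h0 h1).comp htoNat).congr' ?_
  filter_upwards [eventually_ge_atTop 0] with z hz
  simp [← zpow_natCast, Int.toNat_of_nonneg hz]

section TwoPoint

variable {Ω : Type*} {m : MeasurableSpace Ω} {P : Measure Ω} {Z : Ω → ℤ}

lemma ae_eq_one_or_neg_one [IsProbabilityMeasure P] (hZ : Measurable Z)
    (h : P {ω | Z ω = 1} + P {ω | Z ω = -1} = 1) : ∀ᵐ ω ∂P, Z ω = 1 ∨ Z ω = -1 := by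
  have h1 : MeasurableSet {ω | Z ω = 1} := hZ (measurableSet_singleton 1)
  have h2 : MeasurableSet {ω | Z ω = -1} := hZ (measurableSet_singleton (-1))
  have hdisj : Disjoint {ω | Z ω = 1} {ω | Z ω = -1} :=
    Set.disjoint_left.2 fun ω h1 h2 => by simp_all
  exact (ae_mem_iff_measure_eq (h1.union h2).nullMeasurableSet).2
    (by rw [measure_union hdisj h2, h, measure_univ])

lemma comp_ae_eq_indicator_add_indicator (hpm : ∀ᵐ ω ∂P, Z ω = 1 ∨ Z ω = -1) (f : ℤ → ℝ) :
    (fun ω => f (Z ω)) =ᵐ[P]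
      {ω | Z ω = 1}.indicator (fun _ => f 1) + {ω | Z ω = -1}.indicator (fun _ => f (-1)) := by
  filter_upwards [hpm] with ω hω
  rcases hω with h | h <;> simp [h]

lemma integrable_comp_of_ae_eq_one_or_neg_one [IsFiniteMeasure P] (hZ : Measurable Z)
    (hpm : ∀ᵐ ω ∂P, Z ω = 1 ∨ Z ω = -1) (f : ℤ → ℝ) : Integrable (fun ω => f (Z ω)) P :=
  (((integrable_const _).indicator (hZ (measurableSet_singleton 1))).add
    ((integrable_const _).indicator (hZ (measurableSet_singleton (-1))))).congr
    (comp_ae_eq_indicator_add_indicator hpm f).symm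

lemma integral_comp_of_ae_eq_one_or_neg_one [IsFiniteMeasure P] (hZ : Measurable Z)
    (hpm : ∀ᵐ ω ∂P, Z ω = 1 ∨ Z ω = -1) (f : ℤ → ℝ) :
    ∫ ω, f (Z ω) ∂P = P.real {ω | Z ω = 1} * f 1 + P.real {ω | Z ω = -1} * f (-1) := by
  have h1 : MeasurableSet {ω | Z ω = 1} := hZ (measurableSet_singleton 1)
  have h2 : MeasurableSet {ω | Z ω = -1} := hZ (measurableSet_singleton (-1))
  rw [integral_congr_ae (comp_ae_eq_indicator_add_indicator hpm f), integral_add'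
    ((integrable_const _).indicator h1) ((integrable_const _).indicator h2),
    integral_indicator_const _ h1, integral_indicator_const _ h2, smul_eq_mul, smul_eq_mul]

end TwoPoint

section StoppedExp

variable {Ω : Type*} {m : MeasurableSpace Ω} {P : Measure Ω} {S X : ℕ → Ω → ℤ} {r : ℝ}

def ruinedBy (S : ℕ → Ω → ℤ) (n : ℕ) : Set Ω := {ω | ∃ k ≤ n, S k ω = 0}

open scoped Classical in
/-- `r ^ S (min n τ)` for the hitting time `τ` of `0`, using `S τ = 0`. -/
noncomputable def stoppedExp (r : ℝ) (S : ℕ → Ω → ℤ) (n : ℕ) (ω : Ω) : ℝ :=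
  if ω ∈ ruinedBy S n then 1 else r ^ S n ω

lemma mem_ruinedBy_succ {n : ℕ} {ω : Ω} :
    ω ∈ ruinedBy S (n + 1) ↔ ω ∈ ruinedBy S n ∨ S (n + 1) ω = 0 := by
  simp only [ruinedBy, Set.mem_ofPred_eq, Nat.le_succ_iff, or_and_right, exists_or]
  simp

lemma stoppedExp_zero (ω : Ω) : stoppedExp r S 0 ω = r ^ S 0 ω := by
  unfold stoppedExp ruinedBy
  split_ifs with h
  · obtain ⟨k, hk, h0⟩ := h
    rw [Nat.le_zero.1 hk] at h0
    rw [h0, zpow_zero]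
  · rfl

lemma stoppedExp_succ (hr : r ≠ 0) (hSrec : ∀ n ω, S (n + 1) ω = S n ω + X (n + 1) ω)
    (n : ℕ) (ω : Ω) :
    stoppedExp r S (n + 1) ω = stoppedExp r S n ω +
      (ruinedBy S n)ᶜ.indicator (fun ω => r ^ S n ω) ω * (r ^ X (n + 1) ω - 1) := by
  have hstep : r ^ S (n + 1) ω = r ^ S n ω * r ^ X (n + 1) ω := by
    rw [hSrec, zpow_add₀ hr]
  by_cases hn : ω ∈ ruinedBy S n
  · simp [stoppedExp, hn, mem_ruinedBy_succ.2 (Or.inl hn)]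
  by_cases h0 : S (n + 1) ω = 0
  · rw [h0, zpow_zero] at hstep
    simp [stoppedExp, hn, mem_ruinedBy_succ.2 (Or.inr h0), mul_sub, ← hstep]
  · simp [stoppedExp, hn, mem_ruinedBy_succ, h0, mul_sub, hstep]

lemma one_le_of_notMem_ruinedBy (hSrec : ∀ n ω, S (n + 1) ω = S n ω + X (n + 1) ω) {ω : Ω}
    (h0 : 0 ≤ S 0 ω) (hstep : ∀ k, -1 ≤ X k ω) {n : ℕ} (hn : ω ∉ ruinedBy S n) :
    1 ≤ S n ω := by
  induction n with
  | zero => exact lt_of_le_of_ne h0 fun h => hn ⟨0, le_rfl, h.symm⟩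
  | succ n ih =>
    rw [mem_ruinedBy_succ, not_or] at hn
    have := ih hn.1
    have := hstep (n + 1)
    have := hSrec n ω
    omega

lemma norm_stoppedExp_le_one (hr0 : 0 < r) (hr1 : r ≤ 1)
    (hSrec : ∀ n ω, S (n + 1) ω = S n ω + X (n + 1) ω) {ω : Ω}
    (h0 : 0 ≤ S 0 ω) (hstep : ∀ k, -1 ≤ X k ω) (n : ℕ) : ‖stoppedExp r S n ω‖ ≤ 1 := by
  unfold stoppedExp
  split_ifs with hn
  · simp
  · rw [Real.norm_of_nonneg (zpow_pos hr0 _).le]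
    exact zpow_le_one₀ hr0 hr1 (zero_le_one.trans (one_le_of_notMem_ruinedBy hSrec h0 hstep hn))

lemma measurableSet_ruinedBy {ℱ : Filtration ℕ m} (hS : ∀ n, Measurable[ℱ n] (S n)) (n : ℕ) :
    MeasurableSet[ℱ n] (ruinedBy S n) := by
  have : ruinedBy S n = ⋃ k, ⋃ (_ : k ≤ n), S k ⁻¹' {0} := by ext; simp [ruinedBy]
  rw [this]
  exact .iUnion fun k => .iUnion fun hk =>
    (hS k).mono (ℱ.mono hk) le_rfl (measurableSet_singleton 0)

lemma measurable_stoppedExp {ℱ : Filtration ℕ m} (hS : ∀ n, Measurable[ℱ n] (S n)) (n : ℕ) :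
    Measurable[ℱ n] (stoppedExp r S n) :=
  Measurable.ite (measurableSet_ruinedBy hS n) measurable_const
    ((measurable_of_countable _).comp (hS n))

lemma integral_stoppedExp_succ [IsProbabilityMeasure P] {ℱ : Filtration ℕ m} (hr : r ≠ 0)
    (hSrec : ∀ n ω, S (n + 1) ω = S n ω + X (n + 1) ω) (hS : ∀ n, Measurable[ℱ n] (S n))
    (hW : ∀ n, Integrable (stoppedExp r S n) P) {n : ℕ} (hX : Measurable (X (n + 1)))
    (hindep : Indep (MeasurableSpace.comap (X (n + 1)) inferInstance) (ℱ n) P)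
    (hint : Integrable (fun ω => r ^ X (n + 1) ω) P) (hmean : ∫ ω, r ^ X (n + 1) ω ∂P = 1) :
    ∫ ω, stoppedExp r S (n + 1) ω ∂P = ∫ ω, stoppedExp r S n ω ∂P := by
  set F := (ruinedBy S n)ᶜ.indicator (fun ω => r ^ S n ω)
  set G := fun ω => r ^ X (n + 1) ω - 1
  have hF : Measurable[ℱ n] F :=
    ((measurable_of_countable _).comp (hS n)).indicator (measurableSet_ruinedBy hS n).compl
  have hG : Measurable[MeasurableSpace.comap (X (n + 1)) inferInstance] G :=
    (measurable_of_countable fun z : ℤ => r ^ z - 1).comp (comap_measurable _)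
  have hFG : IndepFun F G P := (IndepFun_iff_Indep F G P).2 <|
    indep_of_indep_of_le_right (indep_of_indep_of_le_left hindep.symm hF.comap_le) hG.comap_le
  have hGmean : ∫ ω, G ω ∂P = 0 := by
    rw [integral_sub hint (integrable_const 1), hmean, integral_const, probReal_univ, one_smul,
      sub_self]
  rw [← sub_eq_zero, ← integral_sub (hW _) (hW _)]
  calc ∫ ω, (stoppedExp r S (n + 1) ω - stoppedExp r S n ω) ∂P = ∫ ω, F ω * G ω ∂P := by
        congr 1 with ω
        rw [stoppedExp_succ hr hSrec, add_sub_cancel_left]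
    _ = (∫ ω, F ω ∂P) * ∫ ω, G ω ∂P := hFG.integral_fun_mul_eq_mul_integral
        (hF.mono (ℱ.le n) le_rfl).aestronglyMeasurable
        ((measurable_of_countable fun z : ℤ => r ^ z - 1).comp hX).aestronglyMeasurable
    _ = 0 := by rw [hGmean, mul_zero]

lemma integral_stoppedExp [IsProbabilityMeasure P] {ℱ : Filtration ℕ m} (hr : r ≠ 0)
    (hSrec : ∀ n ω, S (n + 1) ω = S n ω + X (n + 1) ω) (hS : ∀ n, Measurable[ℱ n] (S n))
    (hW : ∀ n, Integrable (stoppedExp r S n) P) (hX : ∀ n, Measurable (X n))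
    (hindep : ∀ n, Indep (MeasurableSpace.comap (X (n + 1)) inferInstance) (ℱ n) P)
    (hint : ∀ n, Integrable (fun ω => r ^ X n ω) P) (hmean : ∀ n, ∫ ω, r ^ X n ω ∂P = 1)
    (n : ℕ) : ∫ ω, stoppedExp r S n ω ∂P = ∫ ω, r ^ S 0 ω ∂P := by
  induction n with
  | zero => simp only [stoppedExp_zero]
  | succ n ih =>
    rw [integral_stoppedExp_succ hr hSrec hS hW (hX _) (hindep n) (hint _) (hmean _), ih]

lemma tendsto_stoppedExp (hr0 : 0 ≤ r) (hr1 : r < 1) {ω : Ω}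
    (hS : Tendsto (S · ω) atTop atTop) :
    Tendsto (stoppedExp r S · ω) atTop (𝓝 ({ω | ∃ n, S n ω = 0}.indicator 1 ω)) := by
  by_cases hω : ∃ n, S n ω = 0
  · obtain ⟨n, hn⟩ := hω
    rw [Set.indicator_of_mem (show ω ∈ {ω | ∃ n, S n ω = 0} from ⟨n, hn⟩)]
    refine tendsto_const_nhds.congr' ?_
    filter_upwards [eventually_ge_atTop n] with k hk
    simp [stoppedExp, show ω ∈ ruinedBy S k from ⟨n, hk, hn⟩]
  · rw [Set.indicator_of_notMem (show ω ∉ {ω | ∃ n, S n ω = 0} from hω)]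
    refine ((tendsto_zpow_atTop_nhds_zero_of_lt_one hr0 hr1).comp hS).congr fun k => ?_
    simp [stoppedExp, ruinedBy, fun n => not_exists.1 hω n]

end StoppedExp

section Walk

variable {Ω : Type*} {m : MeasurableSpace Ω} {P : Measure Ω} {S X : ℕ → Ω → ℤ}

lemma measurable_of_succ_eq_add {ℱ : Filtration ℕ m} (hX : ∀ n, Measurable[ℱ n] (X n))
    (hS0 : Measurable[ℱ 0] (S 0)) (hSrec : ∀ n ω, S (n + 1) ω = S n ω + X (n + 1) ω) (n : ℕ) :
    Measurable[ℱ n] (S n) := by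
  induction n with
  | zero => exact hS0
  | succ n ih =>
    rw [show S (n + 1) = S n + X (n + 1) from funext (hSrec n)]
    exact (ih.mono (ℱ.mono n.le_succ) le_rfl).add (hX (n + 1))

lemma ae_tendsto_sum_atTop_of_integral_pos {Y : ℕ → Ω → ℝ} (hint : Integrable (Y 0) P)
    (hindep : Pairwise ((· ⟂ᵢ[P] ·) on Y)) (hident : ∀ i, IdentDistrib (Y i) (Y 0) P P)
    (hpos : 0 < ∫ ω, Y 0 ω ∂P) :
    ∀ᵐ ω ∂P, Tendsto (fun n => ∑ i ∈ range n, Y i ω) atTop atTop := by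
  filter_upwards [strong_law_ae_real Y hint hindep hident] with ω hω
  refine (hω.pos_mul_atTop hpos tendsto_natCast_atTop_atTop).congr' ?_
  filter_upwards [eventually_ne_atTop 0] with n hn
  exact div_mul_cancel₀ _ (Nat.cast_ne_zero.2 hn)

lemma ae_tendsto_atTop_of_integral_pos (hSrec : ∀ n ω, S (n + 1) ω = S n ω + X (n + 1) ω)
    (hindep : iIndepFun X P) (hident : ∀ n, IdentDistrib (X n) (X 0) P P)
    (hint : Integrable (fun ω => (X 0 ω : ℝ)) P) (hpos : 0 < ∫ ω, (X 0 ω : ℝ) ∂P) :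
    ∀ᵐ ω ∂P, Tendsto (S · ω) atTop atTop := by
  have hcast : Measurable (Int.cast : ℤ → ℝ) := measurable_of_countable _
  set Y : ℕ → Ω → ℝ := fun i ω => X (i + 1) ω
  have hY0 : IdentDistrib (Y 0) (fun ω => (X 0 ω : ℝ)) P P := (hident 1).comp hcast
  have hYident (i : ℕ) : IdentDistrib (Y i) (Y 0) P P :=
    ((hident (i + 1)).trans (hident 1).symm).comp hcast
  have hYindep : Pairwise ((· ⟂ᵢ[P] ·) on Y) := fun i j hij =>
    (hindep.indepFun (by omega)).comp hcast hcast
  filter_upwards [ae_tendsto_sum_atTop_of_integral_pos (hY0.integrable_iff.2 hint) hYindep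
    hYident (hY0.integral_eq ▸ hpos)] with ω hω
  have hsum (n : ℕ) : (S n ω : ℝ) = S 0 ω + ∑ i ∈ range n, Y i ω := by
    have := Finset.sum_range_sub (fun k => (S k ω : ℝ)) n
    simp only [hSrec, Int.cast_add, add_sub_cancel_left] at this
    linarith
  refine (tendsto_intCast_atTop_iff (R := ℝ)).1 ?_
  exact (tendsto_atTop_add_const_left _ _ hω).congr fun n => (hsum n).symm

end Walk

lemma measureReal_eq_of_ae_tendsto_indicator {Ω : Type*} {m : MeasurableSpace Ω}
    {P : Measure Ω} [IsFiniteMeasure P] {f : ℕ → Ω → ℝ} {A : Set Ω} {c : ℝ}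
    (hA : MeasurableSet A) (hf : ∀ n, AEStronglyMeasurable (f n) P)
    (hbound : ∀ n, ∀ᵐ ω ∂P, ‖f n ω‖ ≤ 1)
    (hlim : ∀ᵐ ω ∂P, Tendsto (f · ω) atTop (𝓝 (A.indicator 1 ω)))
    (hc : ∀ n, ∫ ω, f n ω ∂P = c) : P.real A = c := by
  have := tendsto_integral_of_dominated_convergence _ hf (integrable_const 1) hbound hlim
  rw [integral_indicator_one hA] at this
  exact tendsto_nhds_unique this (by simp only [hc, tendsto_const_nhds])

theorem gamblers_eventual_ruin_probability_p_gt_half_general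
    {Ω : Type*} [m : MeasurableSpace Ω] (P : Measure Ω) [IsProbabilityMeasure P]
    (p q : ℝ) (hp : 1 / 2 < p) (hp1 : p < 1) (hq : q = 1 - p)
    (x : ℕ)
    (X : ℕ → Ω → ℤ) (hXmeas : ∀ n, Measurable (X n))
    (hindep : iIndepFun X P)
    (hident : ∀ n, IdentDistrib (X n) (X 0) P P)
    (hXup : ∀ n, P {ω | X n ω = 1} = ENNReal.ofReal p)
    (hXdown : ∀ n, P {ω | X n ω = -1} = ENNReal.ofReal q)
    (S : ℕ → Ω → ℤ) (hS0 : ∀ ω, S 0 ω = (x : ℤ))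
    (hSrec : ∀ n ω, S (n + 1) ω = S n ω + X (n + 1) ω) :
    P {ω | ∃ n : ℕ, S n ω = 0} = ENNReal.ofReal ((q / p) ^ x) := by
  have hp0 : 0 < p := by linarith
  have hq0 : 0 < q := by linarith
  have hr0 : 0 < q / p := div_pos hq0 hp0
  have hr1 : q / p < 1 := (div_lt_one hp0).2 (by linarith)
  have hpm (n : ℕ) : ∀ᵐ ω ∂P, X n ω = 1 ∨ X n ω = -1 := ae_eq_one_or_neg_one (hXmeas n) <| by
    rw [hXup, hXdown, ← ENNReal.ofReal_add hp0.le hq0.le, hq, add_sub_cancel, ENNReal.ofReal_one]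
  have hlaw (n : ℕ) (f : ℤ → ℝ) : ∫ ω, f (X n ω) ∂P = p * f 1 + q * f (-1) := by
    rw [integral_comp_of_ae_eq_one_or_neg_one (hXmeas n) (hpm n), measureReal_def, hXup,
      measureReal_def, hXdown, ENNReal.toReal_ofReal hp0.le, ENNReal.toReal_ofReal hq0.le]
  have hW (n : ℕ) : ∀ᵐ ω ∂P, ‖stoppedExp (q / p) S n ω‖ ≤ 1 := by
    filter_upwards [ae_all_iff.2 hpm] with ω hω
    exact norm_stoppedExp_le_one hr0 hr1.le hSrec (by simp [hS0])
      (fun k => by rcases hω k with h | h <;> simp [h]) n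
  let ℱ := Filtration.natural X fun n => (hXmeas n).stronglyMeasurable
  have hS : ∀ n, Measurable[ℱ n] (S n) := measurable_of_succ_eq_add
    (fun n => (Filtration.stronglyAdapted_natural (u := X) _ n).measurable)
    (by rw [funext hS0]; exact measurable_const) hSrec
  have hWmeas (n : ℕ) : AEStronglyMeasurable (stoppedExp (q / p) S n) P :=
    ((measurable_stoppedExp hS n).mono (ℱ.le n) le_rfl).aestronglyMeasurable
  have hruin : MeasurableSet {ω | ∃ n, S n ω = 0} := by
    simp only [Set.ofPred_exists]
    exact .iUnion fun n => (hS n).mono (ℱ.le n) le_rfl (measurableSet_singleton 0)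
  have htransient := ae_tendsto_atTop_of_integral_pos hSrec hindep hident
    (integrable_comp_of_ae_eq_one_or_neg_one (hXmeas 0) (hpm 0) _)
    (by rw [hlaw]; push_cast; linarith)
  rw [← ofReal_measureReal, measureReal_eq_of_ae_tendsto_indicator hruin hWmeas hW
    (htransient.mono fun ω => tendsto_stoppedExp hr0.le hr1)
    (integral_stoppedExp hr0.ne' hSrec hS (fun n => .of_bound (hWmeas n) 1 (hW n)) hXmeas
      (fun n => hindep.indep_comap_natural_of_lt _ n.lt_succ_self)
      (fun n => integrable_comp_of_ae_eq_one_or_neg_one (hXmeas n) (hpm n) _)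
      (fun n => by rw [hlaw]; field_simp; linarith))]
  simp [hS0]

/-- Formula (3.1.7), case `p > 1/2`: for the simple random walk started at
`x > 0` with i.i.d. `±1` steps of probabilities `p` and `q = 1 - p`, the
probability of ever reaching `0` is `(q/p)^x`. -/
theorem gamblers_eventual_ruin_probability_p_gt_half
    {Ω : Type*} [m : MeasurableSpace Ω] (P : Measure Ω) [IsProbabilityMeasure P]
    (p q : ℝ) (hp : 1 / 2 < p) (hp1 : p < 1) (hq : q = 1 - p)
    (x : ℕ) (hx : 0 < x)
    (X : ℕ → Ω → ℤ) (hXmeas : ∀ n, Measurable (X n))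
    (hindep : iIndepFun X P)
    (hident : ∀ n, IdentDistrib (X n) (X 0) P P)
    (hXup : ∀ n, P {ω | X n ω = 1} = ENNReal.ofReal p)
    (hXdown : ∀ n, P {ω | X n ω = -1} = ENNReal.ofReal q)
    (S : ℕ → Ω → ℤ) (hS0 : ∀ ω, S 0 ω = (x : ℤ))
    (hSrec : ∀ n ω, S (n + 1) ω = S n ω + X (n + 1) ω) :
    P {ω | ∃ n : ℕ, S n ω = 0} = ENNReal.ofReal ((q / p) ^ x) :=
  gamblers_eventual_ruin_probability_p_gt_half_general (m := m) P p q hp hp1 hq x X hXmeas hindep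
    hident hXup hXdown S hS0 hSrec
end

section
/- Let p be a real number with 0 < p ≤ 1/2, set q = 1 - p, and let x be a positive integer. Let X₁, X₂, … be i.i.d. random variables on a probability space with P(Xₙ = 1) = p and P(Xₙ = -1) = q, and let Sₙ be the simple random walk defined by S₀ = x and Sₙ = Sₙ₋₁ + Xₙ. Then the probability that there exists some n ≥ 0 with Sₙ = 0 equals 1; i.e., ruin is almost sure. -/
/-!
Let `τ` be the first time the walk hits `0`. The increments are independent with mean
`2p - 1 ≤ 0`, so the walk is a supermartingale, and so is the walk stopped at `τ`. The stopped
walk starts at `x ≥ 0` and moves by `±1`, hence is nonnegative, and a nonnegative supermartingale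
converges almost surely. On `{τ = ∞}` the stopped walk is the walk itself, whose consecutive
terms differ by `1`; it cannot converge there, so `{τ = ∞}` is null.
-/

open MeasureTheory ProbabilityTheory Filter
open scoped ENNReal Topology

theorem nonneg_of_forall_lt_ne_zero {s : ℕ → ℤ} (h0 : 0 ≤ s 0)
    (hstep : ∀ n, s n - 1 ≤ s (n + 1)) {n : ℕ} (hne : ∀ j < n, s j ≠ 0) : 0 ≤ s n := by
  induction n with
  | zero => exact h0
  | succ k ih =>
    have hk : 0 ≤ s k := ih fun j hj => hne j (hj.trans k.lt_succ_self)
    have := hne k k.lt_succ_self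
    have := hstep k
    omega

theorem not_tendsto_of_le_dist_succ {E : Type*} [PseudoMetricSpace E] {u : ℕ → E} {ε : ℝ}
    (hε : 0 < ε) (hu : ∀ n, ε ≤ dist (u (n + 1)) (u n)) (c : E) :
    ¬ Tendsto u atTop (𝓝 c) := fun hc => by
  obtain ⟨N, hN⟩ := Metric.cauchySeq_iff.mp hc.cauchySeq ε hε
  exact (hu N).not_gt (hN _ N.le_succ _ le_rfl)

namespace MeasureTheory

variable {Ω : Type*} {m0 : MeasurableSpace Ω} {μ : Measure Ω}

theorem exists_stoppedProcess_hittingAfter_eq {β : Type*} (u : ℕ → Ω → β) (s : Set β)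
    (n : ℕ) (ω : Ω) :
    ∃ k, stoppedProcess u (hittingAfter u s 0) n ω = u k ω ∧ ∀ j < k, u j ω ∉ s := by
  rcases le_total (n : ℕ∞) (hittingAfter u s 0 ω) with hn | hn
  · exact ⟨n, stoppedProcess_eq_of_le hn, fun j hj =>
      notMem_of_lt_hittingAfter ((WithTop.coe_lt_coe.2 hj).trans_le hn) j.zero_le⟩
  · obtain ⟨k, hk⟩ := WithTop.ne_top_iff_exists.1 (ne_top_of_le_ne_top WithTop.coe_ne_top hn)
    refine ⟨k, by rw [stoppedProcess_eq_of_ge hn, ← hk]; rfl, fun j hj => ?_⟩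
    exact notMem_of_lt_hittingAfter (hk ▸ WithTop.coe_lt_coe.2 hj) j.zero_le

protected theorem Supermartingale.stoppedProcess {𝒢 : Filtration ℕ m0} {f : ℕ → Ω → ℝ}
    {τ : Ω → ℕ∞} [SigmaFiniteFiltration μ 𝒢] (hf : Supermartingale f 𝒢 μ)
    (hτ : IsStoppingTime 𝒢 τ) : Supermartingale (stoppedProcess f τ) 𝒢 μ := by
  simpa [show stoppedProcess (-f) τ = -(stoppedProcess f τ) from rfl] using
    (hf.neg.stoppedProcess hτ).neg

theorem Supermartingale.exists_ae_tendsto_of_nonneg [IsFiniteMeasure μ] {𝒢 : Filtration ℕ m0}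
    {f : ℕ → Ω → ℝ} (hf : Supermartingale f 𝒢 μ) (hnonneg : ∀ n, 0 ≤ᵐ[μ] f n) :
    ∀ᵐ ω ∂μ, ∃ c, Tendsto (fun n => f n ω) atTop (𝓝 c) := by
  have hbdd (n : ℕ) : eLpNorm ((-f) n) 1 μ ≤ (μ[f 0]).toNNReal := by
    rw [Pi.neg_apply, eLpNorm_neg, eLpNorm_one_eq_lintegral_enorm,
      ← ofReal_integral_norm_eq_lintegral_enorm (hf.integrable n)]
    refine ENNReal.ofReal_le_ofReal ?_
    calc ∫ ω, ‖f n ω‖ ∂μ = μ[f n] :=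
          integral_congr_ae <| (hnonneg n).mono fun ω hω => Real.norm_of_nonneg hω
      _ ≤ μ[f 0] := by
          simpa using hf.setIntegral_le n.zero_le MeasurableSet.univ
  filter_upwards [hf.neg.exists_ae_tendsto_of_bdd hbdd] with ω ⟨c, hc⟩
  exact ⟨-c, by simpa using hc.neg⟩

theorem supermartingale_natural_of_iIndepFun {f : ℕ → Ω → ℝ}
    (hf : ∀ n, StronglyMeasurable (f n)) (hindep : iIndepFun f μ)
    (hint : ∀ n, Integrable (f n) μ) (hmean : ∀ n, μ[f (n + 1)] ≤ 0) {W : ℕ → Ω → ℝ} {c : ℝ}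
    (hW0 : ∀ ω, W 0 ω = c) (hWsucc : ∀ n ω, W (n + 1) ω = W n ω + f (n + 1) ω) :
    Supermartingale W (Filtration.natural f hf) μ := by
  have := hindep.isProbabilityMeasure
  have hW0' : W 0 = fun _ => c := funext hW0
  have hWsucc' (n : ℕ) : W (n + 1) = W n + f (n + 1) := funext (hWsucc n)
  have hadapted : StronglyAdapted (Filtration.natural f hf) W := by
    intro n
    induction n with
    | zero => rw [hW0']; exact stronglyMeasurable_const
    | succ n ih =>
      rw [hWsucc']
      exact (ih.mono (Filtration.mono _ n.le_succ)).add
        (Filtration.stronglyAdapted_natural hf (n + 1))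
  have hWint (n : ℕ) : Integrable (W n) μ := by
    induction n with
    | zero => rw [hW0']; exact integrable_const c
    | succ n ih => rw [hWsucc']; exact ih.add (hint (n + 1))
  refine supermartingale_of_condExp_sub_nonneg_nat hadapted hWint fun n => ?_
  rw [hWsucc', sub_add_cancel_left]
  filter_upwards [condExp_neg (f (n + 1)) (Filtration.natural f hf n),
    hindep.condExp_natural_ae_eq_of_lt hf n.lt_succ_self] with ω hneg hcond
  rw [hneg, Pi.neg_apply, hcond, Pi.zero_apply, neg_nonneg]
  exact hmean n

theorem ae_eq_one_or_eq_neg_one [IsProbabilityMeasure μ] {ξ : Ω → ℤ} (hξ : Measurable ξ)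
    (h : 1 ≤ μ {ω | ξ ω = 1} + μ {ω | ξ ω = -1}) : ∀ᵐ ω ∂μ, ξ ω = 1 ∨ ξ ω = -1 := by
  set A := {ω | ξ ω = 1}
  set B := {ω | ξ ω = -1}
  have hA : MeasurableSet A := hξ (measurableSet_singleton 1)
  have hB : MeasurableSet B := hξ (measurableSet_singleton (-1))
  have hdisj : Disjoint A B := Set.disjoint_left.2 fun ω h1 h2 => by simp_all [A, B]
  have hunion : μ (A ∪ B) = 1 := le_antisymm prob_le_one (by rwa [measure_union hdisj hB])
  exact (ae_mem_iff_measure_eq (hA.union hB).nullMeasurableSet).2 (by rw [hunion, measure_univ])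

theorem integral_nonpos_of_ae_eq_one_or_eq_neg_one [IsFiniteMeasure μ] {ξ : Ω → ℤ}
    (hξ : Measurable ξ) (hpm : ∀ᵐ ω ∂μ, ξ ω = 1 ∨ ξ ω = -1)
    (hle : μ {ω | ξ ω = 1} ≤ μ {ω | ξ ω = -1}) : ∫ ω, (ξ ω : ℝ) ∂μ ≤ 0 := by
  set A := {ω | ξ ω = 1}
  set B := {ω | ξ ω = -1}
  have hA : MeasurableSet A := hξ (measurableSet_singleton 1)
  have hB : MeasurableSet B := hξ (measurableSet_singleton (-1))
  have hdecomp : (fun ω => (ξ ω : ℝ)) =ᵐ[μ] fun ω => A.indicator 1 ω - B.indicator 1 ω :=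
    hpm.mono fun ω h => by rcases h with h | h <;> simp [A, B, h]
  rw [integral_congr_ae hdecomp, integral_sub ((integrable_const 1).indicator hA)
    ((integrable_const 1).indicator hB), integral_indicator_one hA, integral_indicator_one hB,
    sub_nonpos]
  exact ENNReal.toReal_mono (measure_ne_top μ B) hle

theorem ae_exists_eq_zero_of_integral_step_nonpos {X : ℕ → Ω → ℤ}
    (hXmeas : ∀ n, Measurable (X n)) (hindep : iIndepFun X μ)
    (hstep : ∀ n, ∀ᵐ ω ∂μ, X n ω = 1 ∨ X n ω = -1) (hmean : ∀ n, ∫ ω, (X n ω : ℝ) ∂μ ≤ 0)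
    (x : ℕ) {S : ℕ → Ω → ℤ} (hS0 : ∀ ω, S 0 ω = x)
    (hSrec : ∀ n ω, S (n + 1) ω = S n ω + X (n + 1) ω) :
    ∀ᵐ ω ∂μ, ∃ n, S n ω = 0 := by
  have := hindep.isProbabilityMeasure
  set f : ℕ → Ω → ℝ := fun n ω => X n ω
  have hf (n : ℕ) : StronglyMeasurable (f n) :=
    (measurable_from_top.comp (hXmeas n)).stronglyMeasurable
  have hfint (n : ℕ) : Integrable (f n) μ :=
    Integrable.of_bound (hf n).aestronglyMeasurable 1 <| (hstep n).mono fun ω h => by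
      rcases h with h | h <;> simp [f, h]
  set W : ℕ → Ω → ℝ := fun n ω => S n ω
  have hW : Supermartingale W (Filtration.natural f hf) μ :=
    supermartingale_natural_of_iIndepFun hf (hindep.comp _ fun _ => measurable_from_top) hfint
      (fun n => hmean (n + 1)) (c := x) (by simp [W, hS0]) (by simp [W, f, hSrec])
  set τ := hittingAfter W {0} 0
  have hτ : IsStoppingTime (Filtration.natural f hf) τ :=
    hW.stronglyAdapted.adapted.isStoppingTime_hittingAfter (measurableSet_singleton 0)
  have hsteps := ae_all_iff.2 hstep
  have hnonneg (n : ℕ) : 0 ≤ᵐ[μ] stoppedProcess W τ n := by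
    filter_upwards [hsteps] with ω hω
    obtain ⟨k, hk, hne⟩ := exists_stoppedProcess_hittingAfter_eq W {0} n ω
    rw [Pi.zero_apply, hk]
    refine Int.cast_nonneg_iff.2 (nonneg_of_forall_lt_ne_zero (s := (S · ω)) ?_ ?_ ?_)
    · simp [hS0]
    · intro j
      have := hSrec j ω
      rcases hω (j + 1) with h | h <;> simp only [h] at this <;> omega
    · intro j hj; simpa [W] using hne j hj
  filter_upwards [(hW.stoppedProcess hτ).exists_ae_tendsto_of_nonneg hnonneg, hsteps]
    with ω ⟨c, hc⟩ hω
  by_contra! hnever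
  have hτ_top : τ ω = ⊤ := hittingAfter_eq_top_iff.2 fun j _ => by simpa [W] using hnever j
  refine not_tendsto_of_le_dist_succ one_pos (u := fun n => W n ω) (fun n => ?_) c ?_
  · rcases hω (n + 1) with h | h <;> simp [W, hSrec, h]
  · simpa [stoppedProcess_eq_of_le, hτ_top] using hc

end MeasureTheory

theorem gamblers_eventual_ruin_probability_p_le_half_general
    {Ω : Type*} [m : MeasurableSpace Ω] (P : Measure Ω) [IsProbabilityMeasure P]
    (p q : ℝ) (hp : p ≤ 1 / 2) (hq : q = 1 - p)
    (x : ℕ)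
    (X : ℕ → Ω → ℤ) (hXmeas : ∀ n, Measurable (X n))
    (hindep : iIndepFun X P)
    (hXup : ∀ n, P {ω | X n ω = 1} = ENNReal.ofReal p)
    (hXdown : ∀ n, P {ω | X n ω = -1} = ENNReal.ofReal q)
    (S : ℕ → Ω → ℤ) (hS0 : ∀ ω, S 0 ω = (x : ℤ))
    (hSrec : ∀ n ω, S (n + 1) ω = S n ω + X (n + 1) ω) :
    P {ω | ∃ n : ℕ, S n ω = 0} = 1 := by
  have hstep (n : ℕ) : ∀ᵐ ω ∂P, X n ω = 1 ∨ X n ω = -1 := by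
    refine ae_eq_one_or_eq_neg_one (hXmeas n) ?_
    calc (1 : ℝ≥0∞) = ENNReal.ofReal (p + q) := by rw [hq, add_sub_cancel, ENNReal.ofReal_one]
      _ ≤ _ := by rw [hXup, hXdown]; exact ENNReal.ofReal_add_le
  have hmean (n : ℕ) : ∫ ω, (X n ω : ℝ) ∂P ≤ 0 := by
    refine integral_nonpos_of_ae_eq_one_or_eq_neg_one (hXmeas n) (hstep n) ?_
    rw [hXup, hXdown, hq]
    exact ENNReal.ofReal_le_ofReal (by linarith)
  have hruin := ae_exists_eq_zero_of_integral_step_nonpos hXmeas hindep hstep hmean x hS0 hSrec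
  exact (measure_congr (eventuallyEq_univ.2 hruin)).trans measure_univ

/-- Formula (3.1.7), case `p ≤ 1/2`: for the simple random walk started at
`x > 0` with i.i.d. `±1` steps of probabilities `p` and `q = 1 - p`, ruin
(ever reaching `0`) is almost sure. -/
theorem gamblers_eventual_ruin_probability_p_le_half
    {Ω : Type*} [m : MeasurableSpace Ω] (P : Measure Ω) [IsProbabilityMeasure P]
    (p q : ℝ) (hp0 : 0 < p) (hp : p ≤ 1 / 2) (hq : q = 1 - p)
    (x : ℕ) (hx : 0 < x)
    (X : ℕ → Ω → ℤ) (hXmeas : ∀ n, Measurable (X n))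
    (hindep : iIndepFun X P)
    (hident : ∀ n, IdentDistrib (X n) (X 0) P P)
    (hXup : ∀ n, P {ω | X n ω = 1} = ENNReal.ofReal p)
    (hXdown : ∀ n, P {ω | X n ω = -1} = ENNReal.ofReal q)
    (S : ℕ → Ω → ℤ) (hS0 : ∀ ω, S 0 ω = (x : ℤ))
    (hSrec : ∀ n ω, S (n + 1) ω = S n ω + X (n + 1) ω) :
    P {ω | ∃ n : ℕ, S n ω = 0} = 1 :=
  gamblers_eventual_ruin_probability_p_le_half_general (m := m) P p q hp hq x X hXmeas hindep hXup
    hXdown S hS0 hSrec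
end
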